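/- Let G be a quad-connected cubic graph with a quadrangle C with vertices u1,u2,u3,u4 in order. Let v1 be the neighbor of u1 not on C and v2 the neighbor of u2 not on C. Let w1 ≠ u1 be a neighbor of v1, and z1 ≠ v1 a neighbor of w1. Then G+(u2,u3,v1,w1) is a long 1-extension of G, and if z1 ≠ v2 then G+(u1,u2,w1,z1) is a long 1-extension of G. -/

import Mathlib

/-! If `v₁` had a second neighbour on the quadrangle `C`, or `w₁` had any neighbour on it, then
`C ∪ {v₁}`, resp. `C ∪ {v₁, w₁}`, would be a set of five, resp. six, vertices containing a circuit
with at most four edges leaving it. Quad-connectivity rules this out, because the other side has at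
least four vertices and can be neither a forest nor a second quadrangle. The edges leaving a set are
counted by adding one vertex at a time: a vertex with `k` neighbours already inside changes their
number by `3 - 2k`. The remaining non-adjacencies hold because each vertex of `C` has only one
neighbour off `C`. -/

open SimpleGraph

/-- A graph has a circuit if it contains a cycle. -/
def HasCircuit {V : Type} (G : SimpleGraph V) : Prop :=
  ∃ (v : V) (w : G.Walk v v), w.IsCycle

/-- `s` is the vertex set of a quadrangle (circuit of length four) of `G`. -/
def IsQuadSet {V : Type} (G : SimpleGraph V) (s : Set V) : Prop :=
  ∃ a b c d : V, s = {a, b, c, d} ∧ a ≠ b ∧ a ≠ c ∧ a ≠ d ∧ b ≠ c ∧ b ≠ d ∧ c ≠ d ∧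
    G.Adj a b ∧ G.Adj b c ∧ G.Adj c d ∧ G.Adj d a

def HasQuadrangle {V : Type} (G : SimpleGraph V) : Prop := ∃ s, IsQuadSet G s

def AtMostOneQuadrangle {V : Type} (G : SimpleGraph V) : Prop :=
  ∀ s t, IsQuadSet G s → IsQuadSet G t → s = t

/-- The edge cut `δA`: edges with one end in `A` and the other outside. -/
def cutEdges {V : Type} (G : SimpleGraph V) (A : Set V) : Set (Sym2 V) :=
  {e | ∃ a b, a ∈ A ∧ b ∉ A ∧ G.Adj a b ∧ e = s(a, b)}

/-- `G` is `k`-connected: more than `k` vertices and removing fewer than `k`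
vertices leaves a connected graph. -/
def IsKConnected {V : Type} [Fintype V] (G : SimpleGraph V) (k : ℕ) : Prop :=
  k < Fintype.card V ∧ ∀ S : Set V, S.ncard < k → (G.induce Sᶜ).Connected

/-- Every vertex has degree three. -/
def IsCubic {V : Type} (G : SimpleGraph V) : Prop :=
  ∀ v : V, (G.neighborSet v).ncard = 3

/-- Cyclically `k`-connected cubic graph: 3-connected, at least `2k` vertices, and
every edge-cut of cardinality less than `k` has a circuit-free side. -/
def CyclicallyKConnected {V : Type} [Fintype V] (G : SimpleGraph V) (k : ℕ) : Prop :=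
  IsKConnected G 3 ∧ 2 * k ≤ Fintype.card V ∧
    ∀ A : Set V, A.Nonempty → Aᶜ.Nonempty → (cutEdges G A).ncard < k →
      ¬ HasCircuit (G.induce A) ∨ ¬ HasCircuit (G.induce Aᶜ)

/-- The induced subgraph on `A` is (exactly) a quadrangle. -/
def IsQuadrangleGraphOn {V : Type} (G : SimpleGraph V) (A : Set V) : Prop :=
  ∃ a b c d : V, A = {a, b, c, d} ∧ a ≠ b ∧ a ≠ c ∧ a ≠ d ∧ b ≠ c ∧ b ≠ d ∧ c ≠ d ∧
    G.Adj a b ∧ G.Adj b c ∧ G.Adj c d ∧ G.Adj d a ∧ ¬ G.Adj a c ∧ ¬ G.Adj b d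

/-- Quad-connected cubic graph. -/
def QuadConnected {V : Type} [Fintype V] (G : SimpleGraph V) : Prop :=
  CyclicallyKConnected G 4 ∧ 10 ≤ Fintype.card V ∧
    ((∃ s t, IsQuadSet G s ∧ IsQuadSet G t ∧ s ≠ t) → 12 ≤ Fintype.card V) ∧
    ∀ A : Set V, A.Nonempty → Aᶜ.Nonempty → (cutEdges G A).ncard ≤ 4 →
      (¬ HasCircuit (G.induce A) ∨ IsQuadrangleGraphOn G A) ∨
      (¬ HasCircuit (G.induce Aᶜ) ∨ IsQuadrangleGraphOn G Aᶜ)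

/-- `G+(u,v,x,y)`: subdivide the edges `uv` and `xy` (new vertices `Sum.inr 0`
resp. `Sum.inr 1`) and join the two new vertices by an edge. -/
def onePlus {V : Type} (G : SimpleGraph V) (u v x y : V) : SimpleGraph (V ⊕ Fin 2) :=
  SimpleGraph.fromRel (fun a b =>
    match a, b with
    | Sum.inl a, Sum.inl b => G.Adj a b ∧ s(a, b) ≠ s(u, v) ∧ s(a, b) ≠ s(x, y)
    | Sum.inl a, Sum.inr i => (i = 0 ∧ (a = u ∨ a = v)) ∨ (i = 1 ∧ (a = x ∨ a = y))
    | Sum.inr _, Sum.inl _ => False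
    | Sum.inr i, Sum.inr j => i ≠ j)

/-- The data of a 1-extension `G+(u,v,x,y)`: `uv`, `xy` are edges and
`u,v,x,y` are pairwise distinct. -/
def OneExtData {V : Type} (G : SimpleGraph V) (u v x y : V) : Prop :=
  G.Adj u v ∧ G.Adj x y ∧ u ≠ x ∧ u ≠ y ∧ v ≠ x ∧ v ≠ y

/-- A long 1-extension: moreover neither `u` nor `v` is adjacent to `x` or `y`. -/
def LongOneExtData {V : Type} (G : SimpleGraph V) (u v x y : V) : Prop :=
  OneExtData G u v x y ∧ ¬ G.Adj u x ∧ ¬ G.Adj u y ∧ ¬ G.Adj v x ∧ ¬ G.Adj v y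

/-- A short 1-extension: a 1-extension that is not long. -/
def ShortOneExtData {V : Type} (G : SimpleGraph V) (u v x y : V) : Prop :=
  OneExtData G u v x y ∧ (G.Adj u x ∨ G.Adj u y ∨ G.Adj v x ∨ G.Adj v y)

/-- A homeomorphic embedding of `G` into `H`. -/
structure HomeoEmb {V W : Type} (G : SimpleGraph V) (H : SimpleGraph W) where
  vmap : V → W
  vinj : Function.Injective vmap
  emap : ∀ ⦃a b : V⦄, G.Adj a b → H.Walk (vmap a) (vmap b)
  emap_path : ∀ ⦃a b : V⦄ (h : G.Adj a b), (emap h).IsPath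
  emap_symm : ∀ ⦃a b : V⦄ (h : G.Adj a b), (emap h.symm).reverse = emap h
  internal : ∀ ⦃a b : V⦄ (h : G.Adj a b) (w : W), w ∈ (emap h).support →
      w ∈ Set.range vmap → w = vmap a ∨ w = vmap b
  edge_disjoint : ∀ ⦃a b c d : V⦄ (h₁ : G.Adj a b) (h₂ : G.Adj c d),
      s(a, b) ≠ s(c, d) → ∀ e, e ∈ (emap h₁).edges → e ∉ (emap h₂).edges
  meet_ends : ∀ ⦃a b c d : V⦄ (h₁ : G.Adj a b) (h₂ : G.Adj c d),
      s(a, b) ≠ s(c, d) → ∀ w, w ∈ (emap h₁).support → w ∈ (emap h₂).support →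
      (w = vmap a ∨ w = vmap b) ∧ (w = vmap c ∨ w = vmap d)

/-- Subdividing the edge `uv` of `G`: the new vertex is `Sum.inr ()`. -/
def subdivideEdge {V : Type} (G : SimpleGraph V) (u v : V) : SimpleGraph (V ⊕ Unit) :=
  SimpleGraph.fromRel (fun a b =>
    match a, b with
    | Sum.inl a, Sum.inl b => G.Adj a b ∧ s(a, b) ≠ s(u, v)
    | Sum.inl a, Sum.inr _ => a = u ∨ a = v
    | _, _ => False)

/-- `S` is obtained from `G` by repeatedly subdividing edges. -/
inductive IsSubdivision {V : Type} (G : SimpleGraph V) : {W : Type} → SimpleGraph W → Prop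
  | refl : IsSubdivision G G
  | step {W : Type} {S : SimpleGraph W} {u v : W} (h : S.Adj u v)
      (hS : IsSubdivision G S) : IsSubdivision G (subdivideEdge S u v)

/-- `H` topologically contains `G`: some graph obtained from `G` by repeatedly
subdividing edges is isomorphic to a subgraph of `H`. -/
def TopContains {W V : Type} (H : SimpleGraph W) (G : SimpleGraph V) : Prop :=
  ∃ (U : Type) (S : SimpleGraph U), IsSubdivision G S ∧
    ∃ f : U → W, Function.Injective f ∧ ∀ a b : U, S.Adj a b → H.Adj (f a) (f b)

/-- The biladder on `2p` vertices; `(false, i)` is `uᵢ` and `(true, i)` is `vᵢ`. -/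
def biladder (p : ℕ) : SimpleGraph (Bool × ZMod p) :=
  SimpleGraph.fromRel (fun a b =>
    (a.1 = false ∧ b.1 = false ∧ b.2 = a.2 + 1) ∨
    (a.1 = true ∧ b.1 = true ∧ b.2 = a.2 + 2) ∨
    (a.1 = false ∧ b.1 = true ∧ a.2 = b.2))

open scoped Finset

lemma Sym2.mk_mem_image_mk_left {α : Type} {x a b : α} {S : Set α} :
    s(a, b) ∈ (fun c => s(x, c)) '' S ↔ (a = x ∧ b ∈ S) ∨ (b = x ∧ a ∈ S) := by
  simp only [Set.mem_image, Sym2.eq_iff]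
  constructor
  · rintro ⟨c, hc, (⟨rfl, rfl⟩ | ⟨rfl, rfl⟩)⟩ <;> simp [hc]
  · rintro (⟨rfl, hb⟩ | ⟨rfl, ha⟩)
    · exact ⟨b, hb, .inl ⟨rfl, rfl⟩⟩
    · exact ⟨a, ha, .inr ⟨rfl, rfl⟩⟩

section Cut

variable {V : Type} (G : SimpleGraph V)

lemma mem_cutEdges {A : Set V} {a b : V} :
    s(a, b) ∈ cutEdges G A ↔ G.Adj a b ∧ (a ∈ A ↔ b ∉ A) := by
  constructor
  · rintro ⟨c, d, hc, hd, hcd, h⟩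
    rcases Sym2.eq_iff.mp h with ⟨rfl, rfl⟩ | ⟨rfl, rfl⟩
    · exact ⟨hcd, by tauto⟩
    · exact ⟨hcd.symm, by tauto⟩
  · rintro ⟨hab, h⟩
    by_cases ha : a ∈ A
    · exact ⟨a, b, ha, h.mp ha, hab, rfl⟩
    · exact ⟨b, a, by tauto, ha, hab.symm, Sym2.eq_swap⟩

lemma cutEdges_compl (A : Set V) : cutEdges G Aᶜ = cutEdges G A := by
  ext e
  induction e with
  | _ a b => simp only [mem_cutEdges, Set.mem_compl_iff]; tauto

/-- Moving `x` into `A` removes the cut edges from `x` to `A` and adds those from `x` to the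
rest. -/
lemma ncard_cutEdges_insert [Finite V] {x : V} {A : Set V} (hx : x ∉ A) :
    (cutEdges G (insert x A)).ncard + 2 * (G.neighborSet x ∩ A).ncard =
      (cutEdges G A).ncard + (G.neighborSet x).ncard := by
  set toA := (fun b => s(x, b)) '' (G.neighborSet x ∩ A)
  set awayA := (fun b => s(x, b)) '' (G.neighborSet x \ A)
  have hswap : cutEdges G (insert x A) ∪ toA = cutEdges G A ∪ awayA := by
    ext e
    induction e with
    | _ a b =>
      simp only [Set.mem_union, mem_cutEdges, toA, awayA, Sym2.mk_mem_image_mk_left,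
        Set.mem_insert_iff, Set.mem_inter_iff, Set.mem_sdiff, mem_neighborSet]
      by_cases ha : a = x <;> by_cases hb : b = x <;> subst_vars <;>
        simp_all [G.adj_comm] <;> tauto
  have hdisj_toA : Disjoint (cutEdges G (insert x A)) toA := by
    refine Set.disjoint_left.mpr fun e he₁ he₂ => ?_
    induction e with
    | _ a b =>
      simp only [mem_cutEdges, toA, Sym2.mk_mem_image_mk_left, Set.mem_insert_iff,
        Set.mem_inter_iff] at he₁ he₂
      tauto
  have hdisj_awayA : Disjoint (cutEdges G A) awayA := by
    refine Set.disjoint_left.mpr fun e he₁ he₂ => ?_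
    induction e with
    | _ a b =>
      simp only [mem_cutEdges, awayA, Sym2.mk_mem_image_mk_left, Set.mem_sdiff] at he₁ he₂
      rcases he₂ with ⟨rfl, -, hb⟩ | ⟨rfl, -, ha⟩ <;> tauto
  have hinj : Set.InjOn (fun b => s(x, b)) Set.univ := fun a _ b _ h => Sym2.congr_right.mp h
  have h := congrArg Set.ncard hswap
  rw [Set.ncard_union_eq hdisj_toA, Set.ncard_union_eq hdisj_awayA,
    (hinj.mono (Set.subset_univ _)).ncard_image,
    (hinj.mono (Set.subset_univ _)).ncard_image] at h
  have := Set.ncard_inter_add_ncard_sdiff_eq_ncard (G.neighborSet x) A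
  omega

variable [Fintype V] [DecidableEq V] [DecidableRel G.Adj] (A : Set V) [DecidablePred (· ∈ A)]

lemma ncard_cutEdges_eq_sum :
    (cutEdges G A).ncard = ∑ a ∈ A.toFinset, #(G.neighborFinset a \ A.toFinset) := by
  have hcut : cutEdges G A =
      ↑(A.toFinset.biUnion fun a => (G.neighborFinset a \ A.toFinset).image fun b => s(a, b)) := by
    ext e
    simp only [cutEdges, Set.mem_ofPred_eq, Finset.coe_biUnion, Finset.coe_image, Set.mem_iUnion,
      Set.mem_image, Finset.mem_coe, Set.mem_toFinset, Finset.mem_sdiff, mem_neighborFinset]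
    constructor
    · rintro ⟨a, b, ha, hb, hab, rfl⟩
      exact ⟨a, ha, b, ⟨hab, hb⟩, rfl⟩
    · rintro ⟨a, ha, b, ⟨hab, hb⟩, rfl⟩
      exact ⟨a, b, ha, hb, hab, rfl⟩
  rw [hcut, Set.ncard_coe_finset, Finset.card_biUnion]
  · exact Finset.sum_congr rfl fun a _ =>
      Finset.card_image_of_injective _ fun b c h => Sym2.congr_right.mp h
  · intro a ha a' ha' hne
    refine Finset.disjoint_left.mpr fun e he he' => ?_
    simp only [Finset.mem_coe, Set.mem_toFinset] at ha ha'
    simp only [Finset.mem_image, Finset.mem_sdiff, Set.mem_toFinset] at he he'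
    obtain ⟨b, ⟨-, hb⟩, rfl⟩ := he
    obtain ⟨b', ⟨-, hb'⟩, h⟩ := he'
    rcases Sym2.eq_iff.mp h with ⟨h, -⟩ | ⟨-, rfl⟩
    · exact hne h.symm
    · exact hb' ha

lemma sum_degree_induce_add_ncard_cutEdges :
    ∑ a : A, (G.induce A).degree a + (cutEdges G A).ncard = ∑ a ∈ A.toFinset, G.degree a := by
  have hdeg (a : A) : (G.induce A).degree a = #(G.neighborFinset a ∩ A.toFinset) := by
    rw [← card_neighborFinset_eq_degree, ← map_neighborFinset_induce, Finset.card_map]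
  rw [Finset.sum_congr rfl fun a _ => hdeg a, ncard_cutEdges_eq_sum,
    ← Finset.sum_subtype A.toFinset (fun _ => Set.mem_toFinset)
      (fun a => #(G.neighborFinset a ∩ A.toFinset)), ← Finset.sum_add_distrib]
  exact Finset.sum_congr rfl fun a _ => by
    rw [Finset.card_inter_add_card_sdiff, card_neighborFinset_eq_degree]

end Cut

lemma SimpleGraph.IsAcyclic.card_edgeFinset_add_one_le {W : Type} [Fintype W] [Nonempty W]
    {H : SimpleGraph W} [DecidableRel H.Adj] (hH : H.IsAcyclic) :
    #H.edgeFinset + 1 ≤ Fintype.card W := by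
  classical
  obtain ⟨T, hHT, -, hT⟩ := connected_top.exists_isTree_le_of_le_of_isAcyclic le_top hH
  rw [← hT.card_edgeFinset]
  exact Nat.succ_le_succ (Finset.card_le_card (edgeFinset_mono hHT))

namespace IsCubic

variable {V : Type} {G : SimpleGraph V}

lemma degree_eq [Fintype V] [DecidableRel G.Adj] (hG : IsCubic G) (v : V) : G.degree v = 3 := by
  rw [← hG v, ← card_neighborSet_eq_degree, Set.ncard_eq_toFinset_card', Set.toFinset_card]

lemma eq_or_eq_or_eq_of_adj (hG : IsCubic G) {u a b c x : V} (ha : G.Adj u a) (hb : G.Adj u b)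
    (hc : G.Adj u c) (hab : a ≠ b) (hac : a ≠ c) (hbc : b ≠ c) (hx : G.Adj u x) :
    x = a ∨ x = b ∨ x = c := by
  have hsub : ({a, b, c} : Set V) ⊆ G.neighborSet u := by
    rintro y (rfl | rfl | rfl) <;> assumption
  have heq := Set.eq_of_subset_of_ncard_le hsub
    (by rw [hG u, Set.ncard_eq_three.mpr ⟨a, b, c, hab, hac, hbc, rfl⟩])
    (Set.finite_of_ncard_ne_zero (by rw [hG u]; norm_num))
  have hx' : x ∈ G.neighborSet u := hx
  simpa [← heq] using hx'

lemma ncard_cutEdges_insert_add_le [Finite V] (hG : IsCubic G) {x : V} {A S : Set V}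
    (hx : x ∉ A) (hS : S ⊆ G.neighborSet x ∩ A) :
    (cutEdges G (insert x A)).ncard + 2 * S.ncard ≤ (cutEdges G A).ncard + 3 := by
  have := ncard_cutEdges_insert G hx
  have := Set.ncard_le_ncard hS
  rw [hG x] at *
  omega

lemma subsingleton_neighborSet_diff (hG : IsCubic G) {u a b : V} {C : Set V} (ha : G.Adj u a)
    (hb : G.Adj u b) (hab : a ≠ b) (haC : a ∈ C) (hbC : b ∈ C) :
    (G.neighborSet u \ C).Subsingleton := by
  rintro x ⟨hx, hxC⟩ y ⟨hy, hyC⟩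
  rcases hG.eq_or_eq_or_eq_of_adj ha hb hx hab (ne_of_mem_of_not_mem haC hxC)
    (ne_of_mem_of_not_mem hbC hxC) hy with rfl | rfl | rfl
  exacts [absurd haC hyC, absurd hbC hyC, rfl]

/-- A forest on `n` vertices of a cubic graph has at least `3n - 2(n - 1)` edges leaving it. -/
lemma ncard_add_two_le_ncard_cutEdges [Fintype V] (hG : IsCubic G) {B : Set V} (hB : B.Nonempty)
    (hacyc : ¬ HasCircuit (G.induce B)) : B.ncard + 2 ≤ (cutEdges G B).ncard := by
  classical
  have : Nonempty B := hB.to_subtype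
  have hedges := IsAcyclic.card_edgeFinset_add_one_le (H := G.induce B)
    fun v p hp => hacyc ⟨v, p, hp⟩
  have hsum := sum_degree_induce_add_ncard_cutEdges G B
  rw [sum_degrees_eq_twice_card_edges, Finset.sum_congr rfl fun v _ => hG.degree_eq v,
    Finset.sum_const, smul_eq_mul, ← Set.ncard_eq_toFinset_card'] at hsum
  rw [← Nat.card_eq_fintype_card, Nat.card_coe_set_eq] at hedges
  omega

end IsCubic

section Quadrangle

variable {V : Type} {G : SimpleGraph V}

lemma IsQuadrangleGraphOn.isQuadSet {A : Set V} (h : IsQuadrangleGraphOn G A) : IsQuadSet G A :=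
  let ⟨a, b, c, d, hA, hab, hac, had, hbc, hbd, hcd, h₁, h₂, h₃, h₄, _⟩ := h
  ⟨a, b, c, d, hA, hab, hac, had, hbc, hbd, hcd, h₁, h₂, h₃, h₄⟩

lemma IsQuadSet.ncard_eq {s : Set V} (hs : IsQuadSet G s) : s.ncard = 4 := by
  obtain ⟨a, b, c, d, rfl, hab, hac, had, hbc, hbd, hcd, -⟩ := hs
  rw [Set.ncard_insert_of_notMem (by simp [hab, hac, had]),
    Set.ncard_insert_of_notMem (by simp [hbc, hbd]),
    Set.ncard_insert_of_notMem (by simp [hcd]), Set.ncard_singleton]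

lemma IsQuadSet.hasCircuit_induce {s A : Set V} (hs : IsQuadSet G s) (hsA : s ⊆ A) :
    HasCircuit (G.induce A) := by
  obtain ⟨a, b, c, d, rfl, hab, hac, had, hbc, hbd, hcd, h₁, h₂, h₃, h₄⟩ := hs
  let a' : A := ⟨a, hsA (by simp)⟩
  let b' : A := ⟨b, hsA (by simp)⟩
  let c' : A := ⟨c, hsA (by simp)⟩
  let d' : A := ⟨d, hsA (by simp)⟩
  refine ⟨a', .cons (show (G.induce A).Adj a' b' from h₁)
    (.cons (show (G.induce A).Adj b' c' from h₂) (.cons (show (G.induce A).Adj c' d' from h₃)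
      (.cons (show (G.induce A).Adj d' a' from h₄) .nil))), ?_⟩
  simp [Walk.cons_isCycle_iff, a', b', c', d', hab, hac, had, hbc, hbd, hcd, hab.symm, hac.symm,
    had.symm]

lemma IsQuadSet.ncard_cutEdges_le [Finite V] (hG : IsCubic G) {s : Set V} (hs : IsQuadSet G s) :
    (cutEdges G s).ncard ≤ 4 := by
  obtain ⟨a, b, c, d, rfl, hab, hac, had, hbc, hbd, hcd, h₁, h₂, h₃, h₄⟩ := hs
  have hd := hG.ncard_cutEdges_insert_add_le (x := d) (A := ∅) (S := ∅) (by simp) (by simp)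
  have hc := hG.ncard_cutEdges_insert_add_le (x := c) (A := {d}) (S := {d}) (by simp [hcd])
    (by simpa using h₃)
  have hb := hG.ncard_cutEdges_insert_add_le (x := b) (A := {c, d}) (S := {c})
    (by simp [hbc, hbd]) (by simpa using h₂)
  have ha := hG.ncard_cutEdges_insert_add_le (x := a) (A := {b, c, d}) (S := {b, d})
    (by simp [hab, hac, had]) (by simp [Set.insert_subset_iff, h₁, h₄.symm])
  have hempty : cutEdges G ∅ = ∅ := by simp [cutEdges]
  simp only [← Set.singleton_def, hempty, Set.ncard_empty] at hd
  rw [Set.ncard_singleton] at hc hb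
  rw [Set.ncard_pair hbd] at ha
  omega

end Quadrangle

namespace QuadConnected

variable {V : Type} [Fintype V] {G : SimpleGraph V}

/-- The complement of `A` has at least four vertices: it is not a forest, which would have at most
two, and if it were a quadrangle then `G` would have two quadrangles on only ten vertices. -/
lemma four_lt_ncard_cutEdges (hqc : QuadConnected G) (hG : IsCubic G) {s A : Set V}
    (hs : IsQuadSet G s) (hsA : s ⊆ A) (h5 : 5 ≤ A.ncard) (h6 : A.ncard ≤ 6) :
    4 < (cutEdges G A).ncard := by
  by_contra! hcut
  obtain ⟨-, hten, htwo_quads, hsplit⟩ := hqc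
  have hcard : A.ncard + Aᶜ.ncard = Fintype.card V := by
    rw [Set.ncard_add_ncard_compl, Nat.card_eq_fintype_card]
  have hA : A.Nonempty := Set.nonempty_of_ncard_ne_zero (by omega)
  have hAc : Aᶜ.Nonempty := Set.nonempty_of_ncard_ne_zero (by omega)
  rcases hsplit A hA hAc hcut with (hforest | hquad) | (hforest | hquad)
  · exact hforest (hs.hasCircuit_induce hsA)
  · have := hquad.isQuadSet.ncard_eq
    omega
  · have := hG.ncard_add_two_le_ncard_cutEdges hAc hforest
    rw [cutEdges_compl] at this
    omega
  · have hne : s ≠ Aᶜ := by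
      rintro rfl
      obtain ⟨x, hx⟩ := hAc
      exact hx (hsA hx)
    have := htwo_quads ⟨s, Aᶜ, hs, hquad.isQuadSet, hne⟩
    have := hquad.isQuadSet.ncard_eq
    omega

lemma subsingleton_neighborSet_inter (hqc : QuadConnected G) (hG : IsCubic G) {C : Set V}
    (hC : IsQuadSet G C) {v : V} (hv : v ∉ C) : (G.neighborSet v ∩ C).Subsingleton := by
  rintro a ⟨hva, ha⟩ b ⟨hvb, hb⟩
  by_contra hab
  have hinsert := hG.ncard_cutEdges_insert_add_le hv (S := {a, b})
    (Set.insert_subset_iff.mpr ⟨⟨hva, ha⟩, Set.singleton_subset_iff.mpr ⟨hvb, hb⟩⟩)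
  have hcard : (insert v C).ncard = 5 := by rw [Set.ncard_insert_of_notMem hv, hC.ncard_eq]
  have := hqc.four_lt_ncard_cutEdges hG hC (Set.subset_insert v C) hcard.ge (by omega)
  rw [Set.ncard_pair hab] at hinsert
  have := hC.ncard_cutEdges_le hG
  omega

lemma disjoint_neighborSet_of_adj_of_adj (hqc : QuadConnected G) (hG : IsCubic G) {C : Set V}
    (hC : IsQuadSet G C) {u v w : V} (hu : u ∈ C) (hv : v ∉ C) (hw : w ∉ C) (huv : G.Adj u v)
    (hvw : G.Adj v w) : Disjoint (G.neighborSet w) C := by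
  refine Set.disjoint_left.mpr fun t hwt ht => ?_
  have hwv : w ∉ insert v C := by simp [hw, hvw.ne.symm]
  have hinsert_v := hG.ncard_cutEdges_insert_add_le hv (S := {u})
    (Set.singleton_subset_iff.mpr ⟨huv.symm, hu⟩)
  have hinsert_w := hG.ncard_cutEdges_insert_add_le hwv (S := {v, t})
    (Set.insert_subset_iff.mpr ⟨⟨hvw.symm, Set.mem_insert v C⟩,
      Set.singleton_subset_iff.mpr ⟨hwt, Set.mem_insert_of_mem v ht⟩⟩)
  have hcard : (insert w (insert v C)).ncard = 6 := by
    rw [Set.ncard_insert_of_notMem hwv, Set.ncard_insert_of_notMem hv, hC.ncard_eq]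
  have := hqc.four_lt_ncard_cutEdges hG hC
    ((Set.subset_insert v C).trans (Set.subset_insert w _)) (by omega) hcard.le
  rw [Set.ncard_singleton] at hinsert_v
  rw [Set.ncard_pair (ne_of_mem_of_not_mem ht hv).symm] at hinsert_w
  have := hC.ncard_cutEdges_le hG
  omega

end QuadConnected

theorem quadrangle_extensions_long_general
    {V : Type} [Fintype V] (G : SimpleGraph V) (hcub : IsCubic G)
    (hqc : QuadConnected G) (u₁ u₂ u₃ u₄ : V)
    (hdist : ([u₁, u₂, u₃, u₄] : List V).Pairwise (· ≠ ·))
    (h12 : G.Adj u₁ u₂) (h23 : G.Adj u₂ u₃) (h34 : G.Adj u₃ u₄) (h41 : G.Adj u₄ u₁)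
    (v₁ : V) (hv₁ : G.Adj u₁ v₁) (hv₁C : v₁ ∉ ({u₁, u₂, u₃, u₄} : Set V))
    (v₂ : V) (hv₂ : G.Adj u₂ v₂) (hv₂C : v₂ ∉ ({u₁, u₂, u₃, u₄} : Set V))
    (w₁ : V) (hw₁ : G.Adj v₁ w₁) (hw₁u : w₁ ≠ u₁)
    (z₁ : V) (hz₁ : G.Adj w₁ z₁) (hz₁v : z₁ ≠ v₁) :
    LongOneExtData G u₂ u₃ v₁ w₁ ∧
      (z₁ ≠ v₂ → LongOneExtData G u₁ u₂ w₁ z₁) := by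
  simp only [List.pairwise_cons, List.mem_cons, List.not_mem_nil, or_false, forall_eq_or_imp,
    forall_eq] at hdist
  obtain ⟨⟨d12, d13, d14⟩, ⟨d23, d24⟩, d34, -⟩ := hdist
  set C : Set V := {u₁, u₂, u₃, u₄}
  have hC : IsQuadSet G C :=
    ⟨u₁, u₂, u₃, u₄, rfl, d12, d13, d14, d23, d24, d34, h12, h23, h34, h41⟩
  obtain ⟨hu₁, hu₂, hu₃, hu₄⟩ : u₁ ∈ C ∧ u₂ ∈ C ∧ u₃ ∈ C ∧ u₄ ∈ C := by simp [C]
  have hv₁_only : ∀ t ∈ C, G.Adj t v₁ → t = u₁ := fun t ht htv =>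
    hqc.subsingleton_neighborSet_inter hcub hC hv₁C ⟨htv.symm, ht⟩ ⟨hv₁.symm, hu₁⟩
  have hw₁C : w₁ ∉ C := fun h => hw₁u (hv₁_only w₁ h hw₁.symm)
  have hw₁_far : ∀ t ∈ C, ¬ G.Adj t w₁ := fun t ht htw =>
    Set.disjoint_left.mp (hqc.disjoint_neighborSet_of_adj_of_adj hcub hC hu₁ hv₁C hw₁C hv₁ hw₁)
      htw.symm ht
  have hz₁C : z₁ ∉ C := fun h => hw₁_far z₁ h hz₁.symm
  refine ⟨⟨⟨h23, hw₁, ne_of_mem_of_not_mem hu₂ hv₁C, ne_of_mem_of_not_mem hu₂ hw₁C,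
      ne_of_mem_of_not_mem hu₃ hv₁C, ne_of_mem_of_not_mem hu₃ hw₁C⟩,
    fun h => d12 (hv₁_only u₂ hu₂ h).symm, hw₁_far u₂ hu₂,
    fun h => d13 (hv₁_only u₃ hu₃ h).symm, hw₁_far u₃ hu₃⟩, fun hz₁v₂ => ?_⟩
  refine ⟨⟨h12, hz₁, hw₁u.symm, ne_of_mem_of_not_mem hu₁ hz₁C, ne_of_mem_of_not_mem hu₂ hw₁C,
    ne_of_mem_of_not_mem hu₂ hz₁C⟩, hw₁_far u₁ hu₁, fun h => hz₁v ?_, hw₁_far u₂ hu₂,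
    fun h => hz₁v₂ ?_⟩
  · exact hcub.subsingleton_neighborSet_diff h12 h41.symm d24 hu₂ hu₄ ⟨h, hz₁C⟩ ⟨hv₁, hv₁C⟩
  · exact hcub.subsingleton_neighborSet_diff h12.symm h23 d13 hu₁ hu₃ ⟨h, hz₁C⟩ ⟨hv₂, hv₂C⟩

/-- extensions around a quadrangle are long 1-extensions. -/
theorem quadrangle_extensions_long
    {V : Type} [Fintype V] (G : SimpleGraph V) (hcub : IsCubic G)
    (hqc : QuadConnected G) (u₁ u₂ u₃ u₄ : V)
    (hC : IsQuadrangleGraphOn G {u₁, u₂, u₃, u₄})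
    (hdist : ([u₁, u₂, u₃, u₄] : List V).Pairwise (· ≠ ·))
    (h12 : G.Adj u₁ u₂) (h23 : G.Adj u₂ u₃) (h34 : G.Adj u₃ u₄) (h41 : G.Adj u₄ u₁)
    (v₁ : V) (hv₁ : G.Adj u₁ v₁) (hv₁C : v₁ ∉ ({u₁, u₂, u₃, u₄} : Set V))
    (v₂ : V) (hv₂ : G.Adj u₂ v₂) (hv₂C : v₂ ∉ ({u₁, u₂, u₃, u₄} : Set V))
    (w₁ : V) (hw₁ : G.Adj v₁ w₁) (hw₁u : w₁ ≠ u₁)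
    (z₁ : V) (hz₁ : G.Adj w₁ z₁) (hz₁v : z₁ ≠ v₁) :
    LongOneExtData G u₂ u₃ v₁ w₁ ∧
      (z₁ ≠ v₂ → LongOneExtData G u₁ u₂ w₁ z₁) :=
  quadrangle_extensions_long_general G hcub hqc u₁ u₂ u₃ u₄ hdist h12 h23 h34 h41 v₁ hv₁ hv₁C v₂ hv₂
    hv₂C w₁ hw₁ hw₁u z₁ hz₁ hz₁v
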